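/- Fix λ > 0 and ρ > 0. For γ > 0, set √ω_γ := (2γλρ + 4 − √(γ²λ²ρ² + 4γλρ + 16))/(6γ), let (t₁, t₂) be the solution of the system T₊ with parameters γ and ω_γ, i.e. t₁ = (1 − √(1 + γ²ω_γ) + √(γ²ω_γ − 2 + 2√(1 + γ²ω_γ)))/(2γ√ω_γ), t₂ = (−1 + √(1 + γ²ω_γ) + √(γ²ω_γ − 2 + 2√(1 + γ²ω_γ)))/(2γ√ω_γ), set x_i := (1/(2√ω_γ))·log((1 + t_i)/(1 − t_i)), and define ψ_γ(x) := √(2ω_γ/λ)·sech(√ω_γ(x − x₁)) for x < 0 and ψ_γ(x) := √(2ω_γ/λ)·sech(√ω_γ(x − x₂)) for x > 0. Let g(x) := (ρ√λ/(2√2))·sech((λρ/4)x − (1/2)log(3 + 2√2)). Then, as γ → 0+, ∫_ℝ |ψ_γ(x) − g(x)|² dx + ∫_{ℝ∖{0}} |ψ_γ'(x) − g'(x)|² dx → 0; i.e., ψ_γ converges strongly in H¹(ℝ⁻) ⊕ H¹(ℝ⁺) to a shifted free soliton. -/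

import Mathlib

/-!
As `γ → 0+`, `√ω_γ → λρ/4` and both roots `t₁, t₂` of `T₊` tend to `√2/2`, so both centres
`x₁, x₂` tend to the centre `log(3 + 2√2) / (2 · λρ/4)` of `g`. Hence on each half-line `ψ_γ` is
a sech-soliton whose amplitude, width and centre converge to those of `g`. Such solitons and their
derivatives are eventually dominated by one envelope `C e^{-m|x|}`, which is square integrable,
so dominated convergence gives the convergence of both integrals.
-/

open MeasureTheory Real Filter Set Topology

noncomputable section

/-- sech x = 1 / cosh x -/
def sech (x : ℝ) : ℝ := 1 / Real.cosh x

theorem sech_pos (x : ℝ) : 0 < sech x := by unfold sech; positivity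

@[fun_prop]
theorem continuous_sech : Continuous sech :=
  continuous_const.div continuous_cosh fun x => (cosh_pos x).ne'

theorem hasDerivAt_sech (x : ℝ) : HasDerivAt sech (-(sinh x * sech x ^ 2)) x := by
  refine ((hasDerivAt_const x (1 : ℝ)).div (hasDerivAt_cosh x) (cosh_pos x).ne').congr_deriv ?_
  simp only [sech]
  ring

theorem sech_le_two_mul_exp_neg_abs (x : ℝ) : sech x ≤ 2 * exp (-|x|) := by
  have hexp : exp |x| ≤ 2 * cosh x := by
    rw [cosh_eq]
    rcases abs_cases x with ⟨h, _⟩ | ⟨h, _⟩ <;> rw [h] <;> linarith [exp_pos x, exp_pos (-x)]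
  unfold sech
  rw [exp_neg, div_le_iff₀ (cosh_pos x)]
  calc (1 : ℝ) = (exp |x|)⁻¹ * exp |x| := (inv_mul_cancel₀ (exp_pos _).ne').symm
    _ ≤ (exp |x|)⁻¹ * (2 * cosh x) := by gcongr
    _ = 2 * (exp |x|)⁻¹ * cosh x := by ring

theorem abs_sinh_mul_sech_sq_le_sech (x : ℝ) : |sinh x * sech x ^ 2| ≤ sech x := by
  have hsinh : |sinh x| ≤ cosh x := abs_le.2 ⟨by nlinarith [cosh_sq x, cosh_pos x],
    by nlinarith [cosh_sq x, cosh_pos x]⟩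
  have hsech : sech x * cosh x = 1 := by unfold sech; field_simp [(cosh_pos x).ne']
  rw [abs_mul, abs_of_nonneg (sq_nonneg (sech x))]
  calc |sinh x| * sech x ^ 2 ≤ cosh x * sech x ^ 2 := by gcongr
    _ = sech x := by rw [sq, ← mul_assoc, mul_comm (cosh x), hsech, one_mul]

theorem integrable_exp_neg_mul_abs {b : ℝ} (hb : 0 < b) :
    Integrable fun x : ℝ => exp (-(b * |x|)) := by
  have hIoi : IntegrableOn (fun x : ℝ => exp (-(b * |x|))) (Ioi 0) := by
    refine (exp_neg_integrableOn_Ioi 0 hb).congr_fun (fun x hx => ?_) measurableSet_Ioi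
    simp only [abs_of_pos (mem_Ioi.1 hx), neg_mul]
  rw [← integrableOn_univ, ← Iio_union_Ici (a := (0 : ℝ)), integrableOn_union,
    integrableOn_Ici_iff_integrableOn_Ioi]
  refine ⟨?_, hIoi⟩
  rw [← (Measure.measurePreserving_neg (volume : Measure ℝ)).integrableOn_comp_preimage
    (Homeomorph.neg ℝ).measurableEmbedding]
  simpa [Function.comp_def] using hIoi

theorem integrable_sq_mul_exp_neg_mul_abs (A : ℝ) {m : ℝ} (hm : 0 < m) :
    Integrable fun x : ℝ => (A * exp (-(m * |x|))) ^ 2 := by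
  refine ((integrable_exp_neg_mul_abs (mul_pos two_pos hm)).const_mul (A ^ 2)).congr
    (ae_of_all _ fun x => ?_)
  simp only [mul_pow, ← exp_nat_mul]
  ring_nf

theorem tendsto_integral_sq_sub_of_dominated {α ι : Type*} [MeasurableSpace α] {μ : Measure α}
    {l : Filter ι} [l.IsCountablyGenerated] [l.NeBot] {F : ι → α → ℝ} {f b : α → ℝ}
    (hF_meas : ∀ i, AEStronglyMeasurable (F i) μ) (hb : Integrable (fun x => b x ^ 2) μ)
    (hF_bound : ∀ᶠ i in l, ∀ᵐ x ∂μ, |F i x| ≤ b x) (hf_bound : ∀ᵐ x ∂μ, |f x| ≤ b x)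
    (h_lim : ∀ᵐ x ∂μ, Tendsto (fun i => F i x) l (𝓝 (f x))) :
    Tendsto (fun i => ∫ x, (F i x - f x) ^ 2 ∂μ) l (𝓝 0) := by
  have hf_meas : AEStronglyMeasurable f μ := aestronglyMeasurable_of_tendsto_ae l hF_meas h_lim
  have key := tendsto_integral_filter_of_dominated_convergence (fun x => 4 * b x ^ 2)
    (Eventually.of_forall fun i => ((hF_meas i).sub hf_meas).pow 2) ?_ (hb.const_mul 4)
    (h_lim.mono fun x hx => (hx.sub_const (f x)).pow 2)
  · simpa using key
  filter_upwards [hF_bound] with i hi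
  filter_upwards [hi, hf_bound] with x hFx hfx
  simp only [Pi.pow_apply, Pi.sub_apply, norm_pow, Real.norm_eq_abs, sq_abs]
  nlinarith [abs_le.1 hFx, abs_le.1 hfx]

def soliton (c s d x : ℝ) : ℝ := c * sech (s * (x - d))

@[fun_prop]
theorem continuous_soliton (c s d : ℝ) : Continuous (soliton c s d) := by
  unfold soliton; fun_prop

theorem hasDerivAt_soliton (c s d x : ℝ) :
    HasDerivAt (soliton c s d)
      (-(c * s * (sinh (s * (x - d)) * sech (s * (x - d)) ^ 2))) x := by
  have hinner : HasDerivAt (fun y => s * (y - d)) s x := by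
    simpa using ((hasDerivAt_id x).sub_const d).const_mul s
  refine (((hasDerivAt_sech _).comp x hinner).const_mul c).congr_deriv ?_
  ring

theorem deriv_soliton (c s d x : ℝ) :
    deriv (soliton c s d) x = -(c * s * (sinh (s * (x - d)) * sech (s * (x - d)) ^ 2)) :=
  (hasDerivAt_soliton c s d x).deriv

theorem sech_mul_sub_le {m s d K : ℝ} (hm : 0 < m) (hms : m ≤ s) (hdK : |d| ≤ K) (x : ℝ) :
    sech (s * (x - d)) ≤ 2 * exp (m * K) * exp (-(m * |x|)) := by
  have hshift : m * |x| - m * K ≤ |s * (x - d)| := by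
    rw [abs_mul, abs_of_pos (hm.trans_le hms)]
    have h1 : |x| - K ≤ |x - d| := by linarith [abs_sub_abs_le_abs_sub x d]
    nlinarith [mul_le_mul_of_nonneg_left h1 hm.le, abs_nonneg (x - d)]
  calc sech (s * (x - d)) ≤ 2 * exp (-|s * (x - d)|) := sech_le_two_mul_exp_neg_abs _
    _ ≤ 2 * exp (m * K + -(m * |x|)) := by gcongr; linarith
    _ = 2 * exp (m * K) * exp (-(m * |x|)) := by rw [exp_add, mul_assoc]

theorem abs_soliton_le {c s d m K : ℝ} (hm : 0 < m) (hms : m ≤ s) (hdK : |d| ≤ K) (x : ℝ) :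
    |soliton c s d x| ≤ 2 * |c| * exp (m * K) * exp (-(m * |x|)) := by
  rw [soliton, abs_mul, abs_of_pos (sech_pos _)]
  calc |c| * sech (s * (x - d)) ≤ |c| * (2 * exp (m * K) * exp (-(m * |x|))) := by
        gcongr; exact sech_mul_sub_le hm hms hdK x
    _ = 2 * |c| * exp (m * K) * exp (-(m * |x|)) := by ring

theorem abs_deriv_soliton_le {c s d m K : ℝ} (hm : 0 < m) (hms : m ≤ s) (hdK : |d| ≤ K)
    (x : ℝ) : |deriv (soliton c s d) x| ≤ 2 * |c| * s * exp (m * K) * exp (-(m * |x|)) := by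
  have hs : 0 ≤ s := hm.le.trans hms
  rw [deriv_soliton, abs_neg, abs_mul, abs_mul, abs_of_nonneg hs]
  calc |c| * s * |sinh (s * (x - d)) * sech (s * (x - d)) ^ 2|
      ≤ |c| * s * (2 * exp (m * K) * exp (-(m * |x|))) := by
        gcongr
        exact (abs_sinh_mul_sech_sq_le_sech _).trans (sech_mul_sub_le hm hms hdK x)
    _ = 2 * |c| * s * exp (m * K) * exp (-(m * |x|)) := by ring

section SolitonFamily

variable {ι : Type*} {l : Filter ι} {c s d : ι → ℝ} {c₀ s₀ d₀ : ℝ}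

theorem tendsto_soliton (hc : Tendsto c l (𝓝 c₀)) (hs : Tendsto s l (𝓝 s₀))
    (hd : Tendsto d l (𝓝 d₀)) (x : ℝ) :
    Tendsto (fun i => soliton (c i) (s i) (d i) x) l (𝓝 (soliton c₀ s₀ d₀ x)) :=
  hc.mul ((continuous_sech.tendsto _).comp (hs.mul (tendsto_const_nhds.sub hd)))

theorem tendsto_deriv_soliton (hc : Tendsto c l (𝓝 c₀)) (hs : Tendsto s l (𝓝 s₀))
    (hd : Tendsto d l (𝓝 d₀)) (x : ℝ) :
    Tendsto (fun i => deriv (soliton (c i) (s i) (d i)) x) l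
      (𝓝 (deriv (soliton c₀ s₀ d₀) x)) := by
  simp only [deriv_soliton]
  have hu : Tendsto (fun i => s i * (x - d i)) l (𝓝 (s₀ * (x - d₀))) :=
    hs.mul (tendsto_const_nhds.sub hd)
  exact ((hc.mul hs).mul (((continuous_sinh.tendsto _).comp hu).mul
    (((continuous_sech.tendsto _).comp hu).pow 2))).neg

theorem eventually_abs_soliton_le {m M K C : ℝ} (hc : Tendsto c l (𝓝 c₀))
    (hs : Tendsto s l (𝓝 s₀)) (hd : Tendsto d l (𝓝 d₀)) (hm : 0 < m) (hms₀ : m < s₀) (hs₀M : s₀ < M)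
    (hd₀K : |d₀| < K) (hc₀C : |c₀| < C) :
    ∀ᶠ i in l, ∀ x, |soliton (c i) (s i) (d i) x| ≤ 2 * C * exp (m * K) * exp (-(m * |x|)) ∧
      |deriv (soliton (c i) (s i) (d i)) x| ≤ 2 * C * M * exp (m * K) * exp (-(m * |x|)) := by
  filter_upwards [hs.eventually (lt_mem_nhds hms₀), hs.eventually (gt_mem_nhds hs₀M),
    hd.abs.eventually (gt_mem_nhds hd₀K), hc.abs.eventually (gt_mem_nhds hc₀C)]
    with i hmi hiM hiK hiC x
  constructor
  · refine (abs_soliton_le hm hmi.le hiK.le x).trans ?_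
    gcongr
  · refine (abs_deriv_soliton_le hm hmi.le hiK.le x).trans ?_
    have : 0 ≤ C := (abs_nonneg _).trans hiC.le
    gcongr
    linarith

end SolitonFamily

theorem deriv_ite_lt_zero_of_ne_zero (u v : ℝ → ℝ) {x : ℝ} (hx : x ≠ 0) :
    deriv (fun y => if y < 0 then u y else v y) x = if x < 0 then deriv u x else deriv v x := by
  rcases hx.lt_or_gt with hx | hx
  · rw [if_pos hx]
    exact EventuallyEq.deriv_eq <| mem_of_superset (Iio_mem_nhds hx) fun y hy => if_pos hy
  · rw [if_neg hx.not_gt]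
    exact EventuallyEq.deriv_eq <|
      mem_of_superset (Ioi_mem_nhds hx) fun y hy => if_neg (not_lt.2 (le_of_lt hy))

theorem tendsto_halfLine_solitons {ι : Type*} {l : Filter ι} [l.IsCountablyGenerated] [l.NeBot]
    {c s d₁ d₂ : ι → ℝ} {c₀ s₀ d₀ : ℝ} (hc : Tendsto c l (𝓝 c₀)) (hs : Tendsto s l (𝓝 s₀))
    (hs₀ : 0 < s₀) (hd₁ : Tendsto d₁ l (𝓝 d₀)) (hd₂ : Tendsto d₂ l (𝓝 d₀)) :
    Tendsto (fun i =>
        (∫ x, ((if x < 0 then soliton (c i) (s i) (d₁ i) x else soliton (c i) (s i) (d₂ i) x)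
          - soliton c₀ s₀ d₀ x) ^ 2)
        + ∫ x in ({0}ᶜ : Set ℝ), (deriv (fun y => if y < 0 then soliton (c i) (s i) (d₁ i) y
          else soliton (c i) (s i) (d₂ i) y) x - deriv (soliton c₀ s₀ d₀) x) ^ 2)
      l (𝓝 0) := by
  have hm : 0 < s₀ / 2 := by positivity
  have envelope {c' s' d' : ι → ℝ} (hc' : Tendsto c' l (𝓝 c₀)) (hs' : Tendsto s' l (𝓝 s₀))
      (hd' : Tendsto d' l (𝓝 d₀)) :=
    eventually_abs_soliton_le (M := 2 * s₀) hc' hs' hd' hm (by linarith) (by linarith)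
      (lt_add_one |d₀|) (lt_add_one |c₀|)
  obtain ⟨-, hf⟩ := (envelope tendsto_const_nhds tendsto_const_nhds tendsto_const_nhds).exists
  have h₁ := envelope hc hs hd₁
  have h₂ := envelope hc hs hd₂
  have hL2 : Tendsto (fun i => ∫ x, ((if x < 0 then soliton (c i) (s i) (d₁ i) x
      else soliton (c i) (s i) (d₂ i) x) - soliton c₀ s₀ d₀ x) ^ 2) l (𝓝 0) := by
    refine tendsto_integral_sq_sub_of_dominated
      (fun i => ((continuous_soliton _ _ _).measurable.ite measurableSet_Iio
        (continuous_soliton _ _ _).measurable).aestronglyMeasurable)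
      (integrable_sq_mul_exp_neg_mul_abs _ hm) ?_ (ae_of_all _ fun x => (hf x).1)
      (ae_of_all _ fun x => ?_)
    · filter_upwards [h₁, h₂] with i hi₁ hi₂
      refine ae_of_all _ fun x => ?_
      split_ifs
      exacts [(hi₁ x).1, (hi₂ x).1]
    · split_ifs
      exacts [tendsto_soliton hc hs hd₁ x, tendsto_soliton hc hs hd₂ x]
  have hH1 : Tendsto (fun i => ∫ x, (deriv (fun y => if y < 0 then soliton (c i) (s i) (d₁ i) y
      else soliton (c i) (s i) (d₂ i) y) x - deriv (soliton c₀ s₀ d₀) x) ^ 2) l (𝓝 0) := by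
    have hne : ∀ᵐ x : ℝ, x ≠ 0 := Measure.ae_ne volume 0
    refine tendsto_integral_sq_sub_of_dominated (fun i => (measurable_deriv _).aestronglyMeasurable)
      (integrable_sq_mul_exp_neg_mul_abs _ hm) ?_ (ae_of_all _ fun x => (hf x).2)
      (hne.mono fun x hx => ?_)
    · filter_upwards [h₁, h₂] with i hi₁ hi₂
      filter_upwards [hne] with x hx
      rw [deriv_ite_lt_zero_of_ne_zero _ _ hx]
      split_ifs
      exacts [(hi₁ x).2, (hi₂ x).2]
    · simp only [deriv_ite_lt_zero_of_ne_zero _ _ hx]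
      split_ifs
      exacts [tendsto_deriv_soliton hc hs hd₁ x, tendsto_deriv_soliton hc hs hd₂ x]
  simpa only [restrict_compl_singleton, add_zero] using hL2.add hH1

theorem tendsto_sqrt_omega (a : ℝ) :
    Tendsto (fun γ => (2 * γ * a + 4 - √(γ ^ 2 * a ^ 2 + 4 * γ * a + 16)) / (6 * γ))
      (𝓝[≠] 0) (𝓝 (a / 4)) := by
  set D : ℝ → ℝ := fun γ => 2 * γ * a + 4 + √(γ ^ 2 * a ^ 2 + 4 * γ * a + 16)
  have hD : Continuous D := by fun_prop
  have hD0 : D 0 = 8 := by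
    simp only [D, show (16 : ℝ) = 4 ^ 2 by norm_num]
    norm_num
  have hlim : Tendsto (fun γ => a * (γ * a + 4) / (2 * D γ)) (𝓝 0) (𝓝 (a / 4)) := by
    have hcont : ContinuousAt (fun γ => a * (γ * a + 4) / (2 * D γ)) 0 :=
      (by fun_prop : Continuous fun γ : ℝ => a * (γ * a + 4)).continuousAt.div
        (hD.continuousAt.const_mul 2) (by rw [hD0]; norm_num)
    convert hcont.tendsto using 2
    rw [hD0]
    ring
  -- rationalize the numerator: `(2γa + 4)² - (γ²a² + 4γa + 16) = 3γa(γa + 4)`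
  refine (hlim.mono_left nhdsWithin_le_nhds).congr' ?_
  have hD_pos : ∀ᶠ γ in 𝓝 0, 0 < D γ :=
    (hD.tendsto 0).eventually (lt_mem_nhds (by rw [hD0]; norm_num))
  filter_upwards [self_mem_nhdsWithin, nhdsWithin_le_nhds hD_pos] with γ (hγ : γ ≠ 0) hDγ
  have hsq : √(γ ^ 2 * a ^ 2 + 4 * γ * a + 16) ^ 2 = γ ^ 2 * a ^ 2 + 4 * γ * a + 16 :=
    sq_sqrt (by nlinarith [sq_nonneg (γ * a + 2)])
  rw [div_eq_div_iff (by positivity) (by positivity)]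
  simp only [D]
  nlinarith [hsq]

theorem tendsto_sqrt_one_add_sq_sub_one_div :
    Tendsto (fun a : ℝ => (√(1 + a ^ 2) - 1) / a) (𝓝 0) (𝓝 0) := by
  have hcont : ContinuousAt (fun a : ℝ => a / (√(1 + a ^ 2) + 1)) 0 :=
    continuousAt_id.div (by fun_prop) (by positivity)
  have hlim : Tendsto (fun a : ℝ => a / (√(1 + a ^ 2) + 1)) (𝓝 0) (𝓝 0) := by
    simpa using hcont.tendsto
  refine hlim.congr fun a => ?_
  have hb : √(1 + a ^ 2) ^ 2 = 1 + a ^ 2 := sq_sqrt (by positivity)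
  rcases eq_or_ne a 0 with rfl | ha
  · simp
  · rw [div_eq_div_iff (by positivity) ha]
    nlinarith

theorem tendsto_sqrt_sq_sub_two_add_two_sqrt_div :
    Tendsto (fun a : ℝ => √(a ^ 2 - 2 + 2 * √(1 + a ^ 2)) / a) (𝓝[>] 0) (𝓝 √2) := by
  have hcont : ContinuousAt (fun a : ℝ => √((√(1 + a ^ 2) + 3) / (√(1 + a ^ 2) + 1))) 0 :=
    (continuousAt_id.sqrt).comp (f := fun a : ℝ => (√(1 + a ^ 2) + 3) / (√(1 + a ^ 2) + 1))
      ((by fun_prop : ContinuousAt (fun a : ℝ => √(1 + a ^ 2) + 3) 0).div (by fun_prop)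
        (by positivity))
  have h0 : (√(1 + 0 ^ 2) + 3) / (√(1 + 0 ^ 2) + 1) = (2 : ℝ) := by norm_num
  refine ((h0 ▸ hcont.tendsto).mono_left nhdsWithin_le_nhds).congr' ?_
  filter_upwards [self_mem_nhdsWithin] with a (ha : 0 < a)
  set b := √(1 + a ^ 2)
  have hb : b ^ 2 = 1 + a ^ 2 := sq_sqrt (by positivity)
  have hb0 : 0 ≤ b := sqrt_nonneg _
  -- `a² − 2 + 2b = (b − 1)(b + 3)` and `a² = (b − 1)(b + 1)`
  have key : a ^ 2 - 2 + 2 * b = a ^ 2 * ((b + 3) / (b + 1)) := by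
    field_simp
    nlinarith
  rw [key, sqrt_mul (sq_nonneg a), sqrt_sq ha.le, mul_div_cancel_left₀ _ ha.ne']

/-- `σ = 1` gives the root `t₁` of the system `T₊`, `σ = -1` the root `t₂`. -/
theorem tendsto_T_plus_root (σ : ℝ) :
    Tendsto (fun a : ℝ => (σ * (1 - √(1 + a ^ 2)) + √(a ^ 2 - 2 + 2 * √(1 + a ^ 2))) / (2 * a))
      (𝓝[>] 0) (𝓝 (√2 / 2)) := by
  have h := (tendsto_sqrt_sq_sub_two_add_two_sqrt_div.sub
    ((tendsto_sqrt_one_add_sq_sub_one_div.mono_left nhdsWithin_le_nhds).const_mul σ)).div_const 2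
  rw [mul_zero, sub_zero] at h
  refine h.congr fun a => ?_
  ring

theorem tendsto_T_plus_root_comp {s : ℝ → ℝ} {s₀ : ℝ} (hs : Tendsto s (𝓝[>] 0) (𝓝 s₀))
    (hs₀ : 0 < s₀) (σ : ℝ) :
    Tendsto (fun γ => (σ * (1 - √(1 + (γ * s γ) ^ 2))
        + √((γ * s γ) ^ 2 - 2 + 2 * √(1 + (γ * s γ) ^ 2))) / (2 * γ * s γ))
      (𝓝[>] 0) (𝓝 (√2 / 2)) := by
  have ha : Tendsto (fun γ => γ * s γ) (𝓝[>] 0) (𝓝[>] 0) := by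
    refine tendsto_nhdsWithin_iff.2
      ⟨by simpa using (tendsto_id.mono_left nhdsWithin_le_nhds).mul hs, ?_⟩
    filter_upwards [self_mem_nhdsWithin, hs.eventually (lt_mem_nhds hs₀)] with γ hγ hsγ
    exact mul_pos hγ hsγ
  refine ((tendsto_T_plus_root σ).comp ha).congr fun γ => ?_
  simp only [Function.comp_apply, mul_assoc]

theorem tendsto_soliton_center {ι : Type*} {l : Filter ι} {s t : ι → ℝ} {s₀ : ℝ}
    (hs : Tendsto s l (𝓝 s₀)) (hs₀ : s₀ ≠ 0) (ht : Tendsto t l (𝓝 (√2 / 2))) :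
    Tendsto (fun i => 1 / (2 * s i) * log ((1 + t i) / (1 - t i))) l
      (𝓝 (1 / (2 * s₀) * log (3 + 2 * √2))) := by
  have h2 : √2 ^ 2 = 2 := sq_sqrt zero_le_two
  have hne : 1 - √2 / 2 ≠ 0 := by nlinarith [sqrt_nonneg 2]
  have hratio : (1 + √2 / 2) / (1 - √2 / 2) = 3 + 2 * √2 := by
    rw [div_eq_iff hne]
    nlinarith
  refine ((tendsto_const_nhds.div (hs.const_mul 2) (by positivity)).mul
    (((continuousAt_log (by positivity)).tendsto).comp ?_))
  rw [← hratio]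
  exact (ht.const_add 1).div (ht.const_sub 1) hne

theorem shifted_free_soliton_eq {lam ρ : ℝ} (hlam : 0 < lam) (hρ : 0 < ρ) (x : ℝ) :
    ρ * √lam / (2 * √2) * sech (lam * ρ / 4 * x - 1 / 2 * log (3 + 2 * √2))
      = soliton √(2 * (lam * ρ / 4) ^ 2 / lam) (lam * ρ / 4)
          (1 / (2 * (lam * ρ / 4)) * log (3 + 2 * √2)) x := by
  have hamp : √(2 * (lam * ρ / 4) ^ 2 / lam) = ρ * √lam / (2 * √2) := by
    have hsq : (ρ * √lam / (2 * √2)) ^ 2 = 2 * (lam * ρ / 4) ^ 2 / lam := by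
      rw [div_pow, mul_pow, mul_pow, sq_sqrt hlam.le, sq_sqrt zero_le_two]
      field_simp
      ring
    rw [← hsq, sqrt_sq (by positivity)]
  rw [soliton, hamp]
  congr 2
  field_simp

/-- No-defect limit γ → 0+ at fixed mass ρ of the asymmetric non-sign-changing stationary
state of the cubic NLS with a delta-prime interaction: ψ_γ converges strongly in
H¹(ℝ⁻) ⊕ H¹(ℝ⁺) to a shifted free soliton. Here `s γ = √ω_γ`. -/
theorem statement17 (lam ρ : ℝ) (hlam : 0 < lam) (hρ : 0 < ρ)
    (s t₁ t₂ x₁ x₂ : ℝ → ℝ)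
    (hs : ∀ γ, s γ = (2 * γ * lam * ρ + 4
        - Real.sqrt (γ ^ 2 * lam ^ 2 * ρ ^ 2 + 4 * γ * lam * ρ + 16)) / (6 * γ))
    (ht₁ : ∀ γ, t₁ γ = (1 - Real.sqrt (1 + (γ * s γ) ^ 2)
        + Real.sqrt ((γ * s γ) ^ 2 - 2 + 2 * Real.sqrt (1 + (γ * s γ) ^ 2)))
      / (2 * γ * s γ))
    (ht₂ : ∀ γ, t₂ γ = (-1 + Real.sqrt (1 + (γ * s γ) ^ 2)
        + Real.sqrt ((γ * s γ) ^ 2 - 2 + 2 * Real.sqrt (1 + (γ * s γ) ^ 2)))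
      / (2 * γ * s γ))
    (hx₁ : ∀ γ, x₁ γ = (1 / (2 * s γ)) * Real.log ((1 + t₁ γ) / (1 - t₁ γ)))
    (hx₂ : ∀ γ, x₂ γ = (1 / (2 * s γ)) * Real.log ((1 + t₂ γ) / (1 - t₂ γ)))
    (ψ : ℝ → ℝ → ℝ)
    (hψ : ∀ γ x, ψ γ x = if x < 0
      then Real.sqrt (2 * (s γ) ^ 2 / lam) * sech (s γ * (x - x₁ γ))
      else Real.sqrt (2 * (s γ) ^ 2 / lam) * sech (s γ * (x - x₂ γ)))
    (g : ℝ → ℝ)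
    (hg : ∀ x, g x = (ρ * Real.sqrt lam / (2 * Real.sqrt 2)) *
      sech ((lam * ρ / 4) * x - (1 / 2) * Real.log (3 + 2 * Real.sqrt 2))) :
    Tendsto (fun γ : ℝ =>
        (∫ x : ℝ, (ψ γ x - g x) ^ 2)
          + ∫ x in ({(0:ℝ)}ᶜ : Set ℝ), (deriv (ψ γ) x - deriv g x) ^ 2)
      (𝓝[>] 0) (𝓝 0) := by
  have hs₀ : 0 < lam * ρ / 4 := by positivity
  have hs_lim : Tendsto s (𝓝[>] 0) (𝓝 (lam * ρ / 4)) := by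
    refine ((tendsto_sqrt_omega (lam * ρ)).mono_left
      (nhdsWithin_mono _ fun γ (hγ : 0 < γ) => hγ.ne')).congr fun γ => ?_
    rw [hs]
    ring_nf
  have ht₁_lim : Tendsto t₁ (𝓝[>] 0) (𝓝 (√2 / 2)) :=
    (tendsto_T_plus_root_comp hs_lim hs₀ 1).congr fun γ => by rw [ht₁]; ring
  have ht₂_lim : Tendsto t₂ (𝓝[>] 0) (𝓝 (√2 / 2)) :=
    (tendsto_T_plus_root_comp hs_lim hs₀ (-1)).congr fun γ => by rw [ht₂]; ring
  have hψ_eq : ψ = fun γ x => if x < 0 then soliton √(2 * s γ ^ 2 / lam) (s γ) (x₁ γ) x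
      else soliton √(2 * s γ ^ 2 / lam) (s γ) (x₂ γ) x :=
    funext fun γ => funext (hψ γ)
  have hg_eq : g = soliton √(2 * (lam * ρ / 4) ^ 2 / lam) (lam * ρ / 4)
      (1 / (2 * (lam * ρ / 4)) * log (3 + 2 * √2)) :=
    funext fun x => (hg x).trans (shifted_free_soliton_eq hlam hρ x)
  rw [hψ_eq, hg_eq]
  exact tendsto_halfLine_solitons
    ((continuous_sqrt.tendsto _).comp (((hs_lim.pow 2).const_mul 2).div_const lam)) hs_lim hs₀
    ((tendsto_soliton_center hs_lim hs₀.ne' ht₁_lim).congr fun γ => (hx₁ γ).symm)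
    ((tendsto_soliton_center hs_lim hs₀.ne' ht₂_lim).congr fun γ => (hx₂ γ).symm)

end
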